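/- Let s < −1/2. There exists a constant C > 0, depending only on s, such that for every N ≥ 2, every t > 0 and every n ≥ 2, the Kawahara Picard iterates with datum w := w_{N,s} satisfy ‖ g_n[w](t) ‖_{H^s_ξ} ≤ C^n (N t)^{n−1} ‖w‖_{L¹}^{n−2} ‖w‖_{L²}². -/

import Mathlib

open MeasureTheory Filter
open scoped ENNReal NNReal Topology

noncomputable section

/-- Convolution of two functions on `ℝ` with respect to Lebesgue measure. -/
def convR (f g : ℝ → ℂ) : ℝ → ℂ := fun x => ∫ y, f y * g (x - y)

/-- The `L¹` norm `∫ |f|`. -/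
def L1R (f : ℝ → ℂ) : ℝ≥0∞ := ∫⁻ x, (‖f x‖₊ : ℝ≥0∞)

/-- The `L²` norm `(∫ |f|²)^{1/2}`. -/
def L2R (f : ℝ → ℂ) : ℝ≥0∞ := (∫⁻ x, (‖f x‖₊ : ℝ≥0∞) ^ 2) ^ ((1 : ℝ) / 2)

/-- The `H^s` Sobolev norm read on the Fourier side. -/
def HsR (s : ℝ) (f : ℝ → ℂ) : ℝ≥0∞ :=
  (∫⁻ ξ : ℝ, ENNReal.ofReal ((1 + ξ ^ 2) ^ s) * (‖f ξ‖₊ : ℝ≥0∞) ^ 2) ^ ((1 : ℝ) / 2)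

/-- The datum `w_{N,s} = (log N)⁻¹ N^{−s} 1_{[N−1,N+1] ∪ [−N−1,−N+1]}`. -/
def wNs (N s : ℝ) : ℝ → ℂ := fun ξ =>
  (((Real.log N)⁻¹ * N ^ (-s) : ℝ) : ℂ) *
    (Set.Icc (N - 1) (N + 1) ∪ Set.Icc (-N - 1) (-N + 1)).indicator
      (fun _ => (1 : ℂ)) ξ

/-- The property that `g : ℕ → ℝ → (ℝ → ℂ)` is the family of Fourier-side Picard
iterates for the Kawahara equation `∂ₜu − ∂ₓ⁵u + 𝔟∂ₓ³u + ∂ₓ(u²) = 0` with Fourier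
datum `w`: `g 1 t ξ = e^{it(ξ⁵+𝔟ξ³)} w(ξ)` and, for `n ≥ 2`,
`g n t ξ = −iξ Σ_{n₁+n₂=n, n₁,n₂≥1} ∫₀ᵗ e^{i(t−t')(ξ⁵+𝔟ξ³)} (g n₁ t' ∗ g n₂ t')(ξ) dt'`. -/
def KawPicard (b : ℝ) (w : ℝ → ℂ) (g : ℕ → ℝ → ℝ → ℂ) : Prop :=
  (∀ t ξ : ℝ, g 1 t ξ = Complex.exp (Complex.I * t * (ξ ^ 5 + b * ξ ^ 3)) * w ξ) ∧
  (∀ n, 2 ≤ n → ∀ t ξ : ℝ, g n t ξ =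
    -Complex.I * ξ * ∑ k ∈ Finset.Ioo 0 n,
      ∫ t' in (0:ℝ)..t, Complex.exp (Complex.I * (t - t') * (ξ ^ 5 + b * ξ ^ 3)) *
        convR (g k t') (g (n - k) t') ξ)

/-!
The iterates are controlled by induction on `n` through three quantities at each time `t`:
the support of `g_n(t)` lies in `|ξ| ≤ n (N + 1)`, and its sup and `L¹` norms in `ξ` are
`≤ M (K|t|)^{n-1}` and `≤ L n⁻² (K|t|)^{n-1}`, where `M`, `L` are the sup and `L¹` norms of the
datum and `K = 16 (N + 1) L`. Young's inequality bounds `g_k(τ) ∗ g_{n-k}(τ)` in sup norm by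
`‖g_k‖₁ ‖g_{n-k}‖_∞` and in `L¹` by `‖g_k‖₁ ‖g_{n-k}‖₁`. The Duhamel integral turns `|τ|^{n-2}`
into `|t|^{n-1}/(n-1)`, which absorbs the factor `|ξ| ≤ n (N + 1)` produced by the derivative, and
`∑ 1/k² ≤ 2`, `∑ 1/(k²(n-k)²) ≤ 8/n²` keep the sums over `k` under control. Finally, since
`s ≤ 0`, `‖g_n(t)‖²_{H^s} ≤ ‖g_n(t)‖_∞ ‖g_n(t)‖₁`. For `w_{N,s}` one has `M = m`, `L = 4m` with
`m = (log N)⁻¹ N^{-s}`, so `‖g_n(t)‖_{H^s} ≤ 2m (128 N m t)^{n-1}`, which is the claimed bound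
with `C = 32`.
-/

open Function
open scoped Interval

lemma sum_Ioo_inv_sq_mul_inv_sq_le (n : ℕ) :
    ∑ k ∈ Finset.Ioo 0 n, ((k : ℝ) ^ 2)⁻¹ * (((n - k : ℕ) : ℝ) ^ 2)⁻¹ ≤ 8 / n ^ 2 := by
  have hsum : ∑ k ∈ Finset.Ioo 0 n, ((k : ℝ) ^ 2)⁻¹ ≤ 2 := by
    simpa using sum_Ioo_inv_sq_le (α := ℝ) 0 n
  have hreflect : ∑ k ∈ Finset.Ioo 0 n, (((n - k : ℕ) : ℝ) ^ 2)⁻¹ =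
      ∑ k ∈ Finset.Ioo 0 n, ((k : ℝ) ^ 2)⁻¹ :=
    Finset.sum_nbij' (n - ·) (n - ·) (by simp; omega) (by simp; omega) (by simp; omega)
      (by simp; omega) fun _ _ => rfl
  -- `(k + j)² ≤ 2 (k² + j²)`, divided by `k² j² (k + j)²`
  have hterm : ∀ k ∈ Finset.Ioo 0 n, ((k : ℝ) ^ 2)⁻¹ * (((n - k : ℕ) : ℝ) ^ 2)⁻¹ ≤
      2 / n ^ 2 * (((k : ℝ) ^ 2)⁻¹ + (((n - k : ℕ) : ℝ) ^ 2)⁻¹) := by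
    intro k hk
    obtain ⟨hk0, hkn⟩ := Finset.mem_Ioo.mp hk
    have hn : (n : ℝ) = k + (n - k : ℕ) := by exact_mod_cast (Nat.add_sub_cancel' hkn.le).symm
    have hk_pos : (0 : ℝ) < k := by exact_mod_cast hk0
    have hj_pos : (0 : ℝ) < (n - k : ℕ) := by exact_mod_cast Nat.sub_pos_of_lt hkn
    rw [hn]
    field_simp
    nlinarith [sq_nonneg ((k : ℝ) - (n - k : ℕ)), mul_pos hk_pos hj_pos]
  calc ∑ k ∈ Finset.Ioo 0 n, ((k : ℝ) ^ 2)⁻¹ * (((n - k : ℕ) : ℝ) ^ 2)⁻¹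
      ≤ ∑ k ∈ Finset.Ioo 0 n, 2 / n ^ 2 * (((k : ℝ) ^ 2)⁻¹ + (((n - k : ℕ) : ℝ) ^ 2)⁻¹) :=
        Finset.sum_le_sum hterm
    _ = 2 / n ^ 2 * (∑ k ∈ Finset.Ioo 0 n, ((k : ℝ) ^ 2)⁻¹ +
          ∑ k ∈ Finset.Ioo 0 n, (((n - k : ℕ) : ℝ) ^ 2)⁻¹) := by
        rw [← Finset.mul_sum, Finset.sum_add_distrib]
    _ ≤ 2 / n ^ 2 * (2 + 2) := by rw [hreflect]; gcongr
    _ = 8 / n ^ 2 := by ring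

-- `n / (n - 1) ≤ 2`: the time integral absorbs the factor `|ξ| ≤ n R` of the derivative.
lemma mul_pow_div_succ_le {n : ℕ} (hn : 2 ≤ n) {R c K A : ℝ} (hR : 0 ≤ R) (hc : 0 ≤ c)
    (hK : 0 ≤ K) (h : 2 * R * c ≤ K * A) (t : ℝ) :
    n * R * (c * K ^ (n - 2)) * |t| ^ (n - 2 + 1) / ((n - 2 : ℕ) + 1) ≤
      A * (K * |t|) ^ (n - 1) := by
  obtain ⟨m, rfl⟩ : ∃ m, n = m + 2 := ⟨n - 2, by omega⟩
  simp only [Nat.add_sub_cancel, show m + 2 - 1 = m + 1 by omega]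
  rw [div_le_iff₀ (by positivity)]
  push_cast
  calc (m + 2 : ℝ) * R * (c * K ^ m) * |t| ^ (m + 1)
      ≤ 2 * (m + 1) * (R * c) * (K ^ m * |t| ^ (m + 1)) := by
        rw [show (m + 2 : ℝ) * R * (c * K ^ m) * |t| ^ (m + 1) =
          (m + 2) * (R * c) * (K ^ m * |t| ^ (m + 1)) by ring]
        gcongr
        linarith
    _ ≤ (m + 1) * (K * A) * (K ^ m * |t| ^ (m + 1)) := by
        rw [show 2 * (m + 1 : ℝ) * (R * c) = (m + 1) * (2 * R * c) by ring]
        gcongr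
    _ = A * (K * |t|) ^ (m + 1) * (m + 1) := by ring

lemma enorm_convR_le (f h : ℝ → ℂ) (ξ : ℝ) :
    ‖convR f h ξ‖ₑ ≤ ∫⁻ y, ‖f y‖ₑ * ‖h (ξ - y)‖ₑ := by
  simpa only [convR, enorm_mul] using enorm_integral_le_lintegral_enorm fun y => f y * h (ξ - y)

lemma enorm_convR_le_lintegral_mul {f h : ℝ → ℂ} (hf : Measurable f) {C : ℝ≥0∞}
    (hh : ∀ y, ‖h y‖ₑ ≤ C) (ξ : ℝ) : ‖convR f h ξ‖ₑ ≤ (∫⁻ y, ‖f y‖ₑ) * C :=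
  calc ‖convR f h ξ‖ₑ ≤ ∫⁻ y, ‖f y‖ₑ * C :=
        (enorm_convR_le f h ξ).trans (lintegral_mono fun y => by gcongr; exact hh _)
    _ = (∫⁻ y, ‖f y‖ₑ) * C := lintegral_mul_const _ hf.enorm

lemma lintegral_enorm_convR_le {f h : ℝ → ℂ} (hf : Measurable f) (hh : Measurable h) :
    ∫⁻ ξ, ‖convR f h ξ‖ₑ ≤ (∫⁻ y, ‖f y‖ₑ) * ∫⁻ y, ‖h y‖ₑ :=
  calc ∫⁻ ξ, ‖convR f h ξ‖ₑ ≤ ∫⁻ ξ, ∫⁻ y, ‖f y‖ₑ * ‖h (ξ - y)‖ₑ :=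
        lintegral_mono fun ξ => enorm_convR_le f h ξ
    _ = ∫⁻ y, ∫⁻ ξ, ‖f y‖ₑ * ‖h (ξ - y)‖ₑ :=
        lintegral_lintegral_swap (((hf.comp measurable_snd).enorm).mul
          ((hh.comp (measurable_fst.sub measurable_snd)).enorm)).aemeasurable
    _ = ∫⁻ y, ‖f y‖ₑ * ∫⁻ ξ, ‖h ξ‖ₑ := by
        refine lintegral_congr fun y => ?_
        rw [lintegral_const_mul _ (show Measurable fun ξ => ‖h (ξ - y)‖ₑ by fun_prop),
          (measurePreserving_sub_right volume y).lintegral_comp hh.enorm]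
    _ = (∫⁻ y, ‖f y‖ₑ) * ∫⁻ y, ‖h y‖ₑ := lintegral_mul_const _ hf.enorm

lemma convR_eq_zero_of_lt_abs {f h : ℝ → ℂ} {a c ξ : ℝ} (hf : ∀ y, a < |y| → f y = 0)
    (hh : ∀ y, c < |y| → h y = 0) (hξ : a + c < |ξ|) : convR f h ξ = 0 := by
  have hzero : ∀ y, f y * h (ξ - y) = 0 := fun y => by
    by_cases hy : a < |y|
    · rw [hf y hy, zero_mul]
    · rw [hh (ξ - y) (by linarith [abs_sub_abs_le_abs_sub ξ y]), mul_zero]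
  simp [convR, hzero]

lemma measurable_convR_uncurry {f h : ℝ → ℝ → ℂ} (hf : Measurable (uncurry f))
    (hh : Measurable (uncurry h)) : Measurable (uncurry fun t => convR (f t) (h t)) := by
  have hprod : Measurable fun q : (ℝ × ℝ) × ℝ => f q.1.1 q.2 * h q.1.1 (q.1.2 - q.2) :=
    (hf.comp (measurable_fst.fst.prodMk measurable_snd)).mul
      (hh.comp (measurable_fst.fst.prodMk (measurable_fst.snd.sub measurable_snd)))
  exact hprod.stronglyMeasurable.integral_prod_right'.measurable

lemma stronglyMeasurable_intervalIntegral {α E : Type*} [MeasurableSpace α]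
    [NormedAddCommGroup E] [NormedSpace ℝ E] {Φ : α → ℝ → E}
    (hΦ : StronglyMeasurable (uncurry Φ)) {a b : α → ℝ} (ha : Measurable a) (hb : Measurable b) :
    StronglyMeasurable fun x => ∫ τ in a x..b x, Φ x τ := by
  simp_rw [intervalIntegral.intervalIntegral_eq_integral_uIoc,
    ← integral_indicator measurableSet_uIoc]
  have hS : MeasurableSet {p : α × ℝ | p.2 ∈ Ι (a p.1) (b p.1)} :=
    (measurableSet_lt ((ha.comp measurable_fst).min (hb.comp measurable_fst)) measurable_snd).inter
      (measurableSet_le measurable_snd ((ha.comp measurable_fst).max (hb.comp measurable_fst)))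
  exact ((Measurable.ite (measurableSet_le ha hb) measurable_const
    measurable_const).stronglyMeasurable).smul (hΦ.indicator hS).integral_prod_right'

lemma enorm_intervalIntegral_le_setLIntegral_uIoc {E : Type*} [NormedAddCommGroup E]
    [NormedSpace ℝ E] (F : ℝ → E) (a b : ℝ) :
    ‖∫ τ in a..b, F τ‖ₑ ≤ ∫⁻ τ in Ι a b, ‖F τ‖ₑ := by
  rw [intervalIntegral.intervalIntegral_eq_integral_uIoc, enorm_smul]
  split_ifs <;> simpa using enorm_integral_le_lintegral_enorm _

lemma setLIntegral_uIoc_le_abs_pow {φ : ℝ → ℝ≥0∞} {c : ℝ} (hc : 0 ≤ c) {p : ℕ}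
    (hφ : ∀ τ, φ τ ≤ ENNReal.ofReal (c * |τ| ^ p)) (t : ℝ) :
    ∫⁻ τ in Ι 0 t, φ τ ≤ ENNReal.ofReal (c * |t| ^ (p + 1) / (p + 1)) := by
  refine (lintegral_mono hφ).trans_eq ?_
  have hint : IntegrableOn (fun τ : ℝ => c * |τ| ^ p) (Ι 0 t) :=
    (by fun_prop : Continuous fun τ : ℝ => c * |τ| ^ p).integrableOn_uIoc
  rw [← ofReal_integral_eq_lintegral_ofReal hint (Eventually.of_forall fun τ => by positivity),
    integral_const_mul]
  simpa [mul_div_assoc] using congrArg (fun x => ENNReal.ofReal (c * x))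
    (integral_pow_abs_sub_uIoc (a := 0) (b := t) p)

def kawaharaDuhamel (b : ℝ) (F : ℝ → ℝ → ℂ) (t ξ : ℝ) : ℂ :=
  ∫ t' in (0:ℝ)..t, Complex.exp (Complex.I * (t - t') * (ξ ^ 5 + b * ξ ^ 3)) * F t' ξ

lemma enorm_exp_I_mul_mul_ofReal (x y : ℝ) :
    ‖Complex.exp (Complex.I * x * y)‖ₑ = 1 := by
  rw [mul_assoc, ← Complex.ofReal_mul, Complex.enorm_exp_I_mul_ofReal]

lemma enorm_kawaharaDuhamel_le (b : ℝ) (F : ℝ → ℝ → ℂ) (t ξ : ℝ) :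
    ‖kawaharaDuhamel b F t ξ‖ₑ ≤ ∫⁻ τ in Ι 0 t, ‖F τ ξ‖ₑ := by
  refine (enorm_intervalIntegral_le_setLIntegral_uIoc _ 0 t).trans_eq (lintegral_congr fun τ => ?_)
  have := enorm_exp_I_mul_mul_ofReal (t - τ) (ξ ^ 5 + b * ξ ^ 3)
  push_cast at this
  rw [enorm_mul, this, one_mul]

lemma measurable_kawaharaDuhamel_uncurry (b : ℝ) {F : ℝ → ℝ → ℂ} (hF : Measurable (uncurry F)) :
    Measurable (uncurry (kawaharaDuhamel b F)) := by
  have hΦ : Measurable fun q : (ℝ × ℝ) × ℝ =>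
      Complex.exp (Complex.I * (q.1.1 - q.2) * (q.1.2 ^ 5 + b * q.1.2 ^ 3)) * F q.2 q.1.2 :=
    (by fun_prop : Continuous fun q : (ℝ × ℝ) × ℝ =>
      Complex.exp (Complex.I * (q.1.1 - q.2) * (q.1.2 ^ 5 + b * q.1.2 ^ 3))).measurable.mul
      (hF.comp (measurable_snd.prodMk measurable_fst.snd))
  exact (stronglyMeasurable_intervalIntegral hΦ.stronglyMeasurable measurable_const
    measurable_fst).measurable

def kawaharaPicardStep {ι : Type*} (b : ℝ) (s : Finset ι) (F : ι → ℝ → ℝ → ℂ) (t ξ : ℝ) : ℂ :=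
  -Complex.I * ξ * ∑ k ∈ s, kawaharaDuhamel b (F k) t ξ

section PicardStep

variable {ι : Type*} {b : ℝ} {s : Finset ι} {F : ι → ℝ → ℝ → ℂ} {R : ℝ}

lemma measurable_kawaharaPicardStep_uncurry (hFm : ∀ k ∈ s, Measurable (uncurry (F k))) :
    Measurable (uncurry (kawaharaPicardStep b s F)) :=
  (measurable_const.mul (Complex.measurable_ofReal.comp measurable_snd)).mul
    (Finset.measurable_sum _ fun k hk => measurable_kawaharaDuhamel_uncurry b (hFm k hk))

lemma kawaharaPicardStep_eq_zero (hF : ∀ k ∈ s, ∀ τ ξ, R < |ξ| → F k τ ξ = 0) (t : ℝ) {ξ : ℝ}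
    (hξ : R < |ξ|) : kawaharaPicardStep b s F t ξ = 0 := by
  rw [kawaharaPicardStep, Finset.sum_eq_zero fun k hk => ?_, mul_zero]
  simp [kawaharaDuhamel, hF k hk _ ξ hξ]

lemma enorm_kawaharaPicardStep_le (hF : ∀ k ∈ s, ∀ τ ξ, R < |ξ| → F k τ ξ = 0) (t ξ : ℝ) :
    ‖kawaharaPicardStep b s F t ξ‖ₑ ≤ ENNReal.ofReal R * ∑ k ∈ s, ∫⁻ τ in Ι 0 t, ‖F k τ ξ‖ₑ := by
  rw [kawaharaPicardStep, enorm_mul, ← ofReal_norm, norm_mul, norm_neg, Complex.norm_I, one_mul,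
    Complex.norm_real, Real.norm_eq_abs]
  calc ENNReal.ofReal |ξ| * ‖∑ k ∈ s, kawaharaDuhamel b (F k) t ξ‖ₑ
      ≤ ENNReal.ofReal |ξ| * ∑ k ∈ s, ∫⁻ τ in Ι 0 t, ‖F k τ ξ‖ₑ := by
        gcongr
        exact (enorm_sum_le _ _).trans
          (Finset.sum_le_sum fun k _ => enorm_kawaharaDuhamel_le b (F k) t ξ)
    _ ≤ ENNReal.ofReal R * ∑ k ∈ s, ∫⁻ τ in Ι 0 t, ‖F k τ ξ‖ₑ := by
        by_cases hξ : R < |ξ|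
        · rw [Finset.sum_eq_zero fun k hk => by simp [hF k hk _ ξ hξ], mul_zero, mul_zero]
        · gcongr
          exact not_lt.1 hξ

lemma enorm_kawaharaPicardStep_le_of_le (hR : 0 ≤ R)
    (hF : ∀ k ∈ s, ∀ τ ξ, R < |ξ| → F k τ ξ = 0) {a : ι → ℝ} {p : ℕ} (ha : ∀ k ∈ s, 0 ≤ a k)
    (hFa : ∀ k ∈ s, ∀ τ ξ, ‖F k τ ξ‖ₑ ≤ ENNReal.ofReal (a k * |τ| ^ p)) (t ξ : ℝ) :
    ‖kawaharaPicardStep b s F t ξ‖ₑ ≤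
      ENNReal.ofReal (R * (∑ k ∈ s, a k) * |t| ^ (p + 1) / (p + 1)) := by
  refine (enorm_kawaharaPicardStep_le hF t ξ).trans ?_
  rw [mul_assoc, mul_div_assoc, Finset.sum_mul, Finset.sum_div, ENNReal.ofReal_mul hR,
    ENNReal.ofReal_sum_of_nonneg fun k hk => by have := ha k hk; positivity]
  gcongr with k hk
  simpa only [mul_div_assoc] using
    setLIntegral_uIoc_le_abs_pow (ha k hk) (fun τ => hFa k hk τ ξ) t

lemma lintegral_enorm_kawaharaPicardStep_le_of_le (hR : 0 ≤ R)
    (hF : ∀ k ∈ s, ∀ τ ξ, R < |ξ| → F k τ ξ = 0) (hFm : ∀ k ∈ s, Measurable (uncurry (F k)))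
    {c : ι → ℝ} {p : ℕ} (hc : ∀ k ∈ s, 0 ≤ c k)
    (hFc : ∀ k ∈ s, ∀ τ, ∫⁻ ξ, ‖F k τ ξ‖ₑ ≤ ENNReal.ofReal (c k * |τ| ^ p)) (t : ℝ) :
    ∫⁻ ξ, ‖kawaharaPicardStep b s F t ξ‖ₑ ≤
      ENNReal.ofReal (R * (∑ k ∈ s, c k) * |t| ^ (p + 1) / (p + 1)) := by
  have hswap : ∀ k ∈ s, Measurable (uncurry fun ξ τ => ‖F k τ ξ‖ₑ) := fun k hk =>
    ((hFm k hk).comp measurable_swap).enorm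
  calc ∫⁻ ξ, ‖kawaharaPicardStep b s F t ξ‖ₑ
      ≤ ∫⁻ ξ, ENNReal.ofReal R * ∑ k ∈ s, ∫⁻ τ in Ι 0 t, ‖F k τ ξ‖ₑ :=
        lintegral_mono (enorm_kawaharaPicardStep_le hF t)
    _ = ENNReal.ofReal R * ∑ k ∈ s, ∫⁻ τ in Ι 0 t, ∫⁻ ξ, ‖F k τ ξ‖ₑ := by
        rw [lintegral_const_mul' _ _ ENNReal.ofReal_ne_top,
          lintegral_finsetSum' _ fun k hk => (hswap k hk).lintegral_prod_right.aemeasurable]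
        congr 1
        exact Finset.sum_congr rfl fun k hk => lintegral_lintegral_swap (hswap k hk).aemeasurable
    _ ≤ ENNReal.ofReal (R * (∑ k ∈ s, c k) * |t| ^ (p + 1) / (p + 1)) := by
        rw [mul_assoc, mul_div_assoc, Finset.sum_mul, Finset.sum_div, ENNReal.ofReal_mul hR,
          ENNReal.ofReal_sum_of_nonneg fun k hk => by have := hc k hk; positivity]
        gcongr with k hk
        simpa only [mul_div_assoc] using setLIntegral_uIoc_le_abs_pow (hc k hk) (hFc k hk) t

end PicardStep

structure PicardBounds (M L R K : ℝ) (n : ℕ) (G : ℝ → ℝ → ℂ) : Prop where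
  measurable : Measurable (uncurry G)
  eq_zero : ∀ t ξ, n * R < |ξ| → G t ξ = 0
  enorm_le : ∀ t ξ, ‖G t ξ‖ₑ ≤ ENNReal.ofReal (M * (K * |t|) ^ (n - 1))
  lintegral_enorm_le : ∀ t, ∫⁻ ξ, ‖G t ξ‖ₑ ≤ ENNReal.ofReal (L / n ^ 2 * (K * |t|) ^ (n - 1))

namespace PicardBounds

variable {M L R K : ℝ} {n k : ℕ} {G H : ℝ → ℝ → ℂ}

lemma convR_eq_zero (hG : PicardBounds M L R K k G) (hH : PicardBounds M L R K (n - k) H)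
    (hk : k ≤ n) {τ ξ : ℝ} (hξ : n * R < |ξ|) : convR (G τ) (H τ) ξ = 0 :=
  convR_eq_zero_of_lt_abs (hG.eq_zero τ) (hH.eq_zero τ) (by rw [Nat.cast_sub hk]; linarith)

lemma measurable_convR (hG : PicardBounds M L R K k G) (hH : PicardBounds M L R K (n - k) H) :
    Measurable (uncurry fun τ => convR (G τ) (H τ)) :=
  measurable_convR_uncurry hG.measurable hH.measurable

lemma enorm_convR_le (hG : PicardBounds M L R K k G) (hH : PicardBounds M L R K (n - k) H)
    (hk : k ∈ Finset.Ioo 0 n) (hL : 0 ≤ L) (hK : 0 ≤ K) (τ ξ : ℝ) :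
    ‖convR (G τ) (H τ) ξ‖ₑ ≤
      ENNReal.ofReal (M * L * ((k : ℝ) ^ 2)⁻¹ * K ^ (n - 2) * |τ| ^ (n - 2)) :=
  calc ‖convR (G τ) (H τ) ξ‖ₑ
      ≤ (∫⁻ y, ‖G τ y‖ₑ) * ENNReal.ofReal (M * (K * |τ|) ^ (n - k - 1)) :=
        enorm_convR_le_lintegral_mul (hG.measurable.comp measurable_prodMk_left) (hH.enorm_le τ) ξ
    _ ≤ ENNReal.ofReal (L / k ^ 2 * (K * |τ|) ^ (k - 1)) *
          ENNReal.ofReal (M * (K * |τ|) ^ (n - k - 1)) := by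
        gcongr
        exact hG.lintegral_enorm_le τ
    _ = ENNReal.ofReal (M * L * ((k : ℝ) ^ 2)⁻¹ * K ^ (n - 2) * |τ| ^ (n - 2)) := by
        rw [Finset.mem_Ioo] at hk
        rw [← ENNReal.ofReal_mul (by positivity), show n - 2 = (k - 1) + (n - k - 1) by omega,
          pow_add, pow_add, mul_pow, mul_pow]
        ring_nf

lemma lintegral_enorm_convR_le (hG : PicardBounds M L R K k G)
    (hH : PicardBounds M L R K (n - k) H) (hk : k ∈ Finset.Ioo 0 n) (hL : 0 ≤ L) (hK : 0 ≤ K)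
    (τ : ℝ) :
    ∫⁻ ξ, ‖convR (G τ) (H τ) ξ‖ₑ ≤ ENNReal.ofReal
      (L ^ 2 * (((k : ℝ) ^ 2)⁻¹ * (((n - k : ℕ) : ℝ) ^ 2)⁻¹) * K ^ (n - 2) * |τ| ^ (n - 2)) :=
  calc ∫⁻ ξ, ‖convR (G τ) (H τ) ξ‖ₑ ≤ (∫⁻ y, ‖G τ y‖ₑ) * ∫⁻ y, ‖H τ y‖ₑ :=
        _root_.lintegral_enorm_convR_le (hG.measurable.comp measurable_prodMk_left)
          (hH.measurable.comp measurable_prodMk_left)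
    _ ≤ ENNReal.ofReal (L / k ^ 2 * (K * |τ|) ^ (k - 1)) *
          ENNReal.ofReal (L / ((n - k : ℕ) : ℝ) ^ 2 * (K * |τ|) ^ (n - k - 1)) :=
        mul_le_mul' (hG.lintegral_enorm_le τ) (hH.lintegral_enorm_le τ)
    _ = ENNReal.ofReal (L ^ 2 * (((k : ℝ) ^ 2)⁻¹ * (((n - k : ℕ) : ℝ) ^ 2)⁻¹) * K ^ (n - 2) *
          |τ| ^ (n - 2)) := by
        rw [Finset.mem_Ioo] at hk
        rw [← ENNReal.ofReal_mul (by positivity), show n - 2 = (k - 1) + (n - k - 1) by omega,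
          pow_add, pow_add, mul_pow, mul_pow]
        ring_nf

end PicardBounds

namespace KawPicard

variable {b M L R : ℝ} {w : ℝ → ℂ} {g : ℕ → ℝ → ℝ → ℂ}

lemma picardBounds_one (hg : KawPicard b w g) (hw : Measurable w)
    (hwM : ∀ ξ, ‖w ξ‖ₑ ≤ ENNReal.ofReal M) (hwL : ∫⁻ ξ, ‖w ξ‖ₑ ≤ ENNReal.ofReal L)
    (hw0 : ∀ ξ, R < |ξ| → w ξ = 0) (K : ℝ) : PicardBounds M L R K 1 (g 1) := by
  have hg1 : ∀ t ξ, ‖g 1 t ξ‖ₑ = ‖w ξ‖ₑ := fun t ξ => by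
    have := enorm_exp_I_mul_mul_ofReal t (ξ ^ 5 + b * ξ ^ 3)
    push_cast at this
    rw [hg.1, enorm_mul, this, one_mul]
  refine ⟨?_, fun t ξ hξ => ?_, fun t ξ => ?_, fun t => ?_⟩
  · have : uncurry (g 1) = fun p : ℝ × ℝ =>
        Complex.exp (Complex.I * p.1 * (p.2 ^ 5 + b * p.2 ^ 3)) * w p.2 :=
      funext fun p => hg.1 p.1 p.2
    rw [this]
    exact (by fun_prop : Continuous fun p : ℝ × ℝ =>
      Complex.exp (Complex.I * p.1 * (p.2 ^ 5 + b * p.2 ^ 3))).measurable.mul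
      (hw.comp measurable_snd)
  · rw [hg.1, hw0 ξ (by simpa using hξ), mul_zero]
  · simpa [hg1] using hwM ξ
  · simpa [hg1] using hwL

lemma picardBounds_of_forall_lt (hg : KawPicard b w g) (hM : 0 ≤ M) (hL : 0 ≤ L) (hR : 0 ≤ R)
    {n : ℕ} (hn : 2 ≤ n) (ih : ∀ k ∈ Finset.Ioo 0 n, PicardBounds M L R (16 * R * L) k (g k)) :
    PicardBounds M L R (16 * R * L) n (g n) := by
  set K := 16 * R * L
  have hK : 0 ≤ K := by positivity
  have hnR : 0 ≤ n * R := by positivity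
  set F : ℕ → ℝ → ℝ → ℂ := fun k τ => convR (g k τ) (g (n - k) τ)
  have hgn : g n = kawaharaPicardStep b (Finset.Ioo 0 n) F := funext₂ (hg.2 n hn)
  have ih' : ∀ k ∈ Finset.Ioo 0 n, PicardBounds M L R K (n - k) (g (n - k)) := fun k hk =>
    ih (n - k) (by simp only [Finset.mem_Ioo] at hk ⊢; omega)
  have hF0 : ∀ k ∈ Finset.Ioo 0 n, ∀ τ ξ, n * R < |ξ| → F k τ ξ = 0 := fun k hk _ _ hξ =>
    (ih k hk).convR_eq_zero (ih' k hk) (Finset.mem_Ioo.1 hk).2.le hξ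
  have hFm : ∀ k ∈ Finset.Ioo 0 n, Measurable (uncurry (F k)) := fun k hk =>
    (ih k hk).measurable_convR (ih' k hk)
  rw [hgn]
  refine ⟨measurable_kawaharaPicardStep_uncurry hFm, kawaharaPicardStep_eq_zero hF0,
    fun t ξ => ?_, fun t => ?_⟩
  · refine (enorm_kawaharaPicardStep_le_of_le hnR hF0 (fun k _ => by positivity)
      (fun k hk => (ih k hk).enorm_convR_le (ih' k hk) hk hL hK) t ξ).trans
      (ENNReal.ofReal_le_ofReal ?_)
    rw [← Finset.sum_mul, ← Finset.mul_sum]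
    refine mul_pow_div_succ_le hn hR (by positivity) hK ?_ t
    calc 2 * R * (M * L * ∑ k ∈ Finset.Ioo 0 n, ((k : ℝ) ^ 2)⁻¹) ≤ 2 * R * (M * L * 2) := by
          gcongr
          simpa using sum_Ioo_inv_sq_le (α := ℝ) 0 n
      _ ≤ K * M := by nlinarith [mul_nonneg (mul_nonneg hR hL) hM]
  · refine (lintegral_enorm_kawaharaPicardStep_le_of_le hnR hF0 hFm (fun k _ => by positivity)
      (fun k hk => (ih k hk).lintegral_enorm_convR_le (ih' k hk) hk hL hK) t).trans
      (ENNReal.ofReal_le_ofReal ?_)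
    rw [← Finset.sum_mul, ← Finset.mul_sum]
    refine mul_pow_div_succ_le hn hR (by positivity) hK ?_ t
    calc 2 * R * (L ^ 2 * ∑ k ∈ Finset.Ioo 0 n, ((k : ℝ) ^ 2)⁻¹ * (((n - k : ℕ) : ℝ) ^ 2)⁻¹)
        ≤ 2 * R * (L ^ 2 * (8 / n ^ 2)) := by
          gcongr
          exact sum_Ioo_inv_sq_mul_inv_sq_le n
      _ = K * (L / n ^ 2) := by ring

theorem picardBounds (hg : KawPicard b w g) (hw : Measurable w)
    (hwM : ∀ ξ, ‖w ξ‖ₑ ≤ ENNReal.ofReal M) (hwL : ∫⁻ ξ, ‖w ξ‖ₑ ≤ ENNReal.ofReal L)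
    (hw0 : ∀ ξ, R < |ξ| → w ξ = 0) (hM : 0 ≤ M) (hL : 0 ≤ L) (hR : 0 ≤ R) :
    ∀ n, 1 ≤ n → PicardBounds M L R (16 * R * L) n (g n) := by
  intro n
  induction n using Nat.strong_induction_on with
  | _ n ih =>
    intro hn
    rcases hn.eq_or_lt with rfl | hn
    · exact hg.picardBounds_one hw hwM hwL hw0 _
    · exact hg.picardBounds_of_forall_lt hM hL hR hn fun k hk =>
        ih k (Finset.mem_Ioo.1 hk).2 (Finset.mem_Ioo.1 hk).1

end KawPicard

lemma HsR_le_of_nonpos {s : ℝ} (hs : s ≤ 0) {f : ℝ → ℂ} {A B c : ℝ} (hA : 0 ≤ A) (hc : 0 ≤ c)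
    (hfA : ∀ ξ, ‖f ξ‖ₑ ≤ ENNReal.ofReal A) (hfB : ∫⁻ ξ, ‖f ξ‖ₑ ≤ ENNReal.ofReal B)
    (hABc : A * B ≤ c ^ 2) : HsR s f ≤ ENNReal.ofReal c := by
  have hweight : ∀ ξ : ℝ, ENNReal.ofReal ((1 + ξ ^ 2) ^ s) ≤ 1 := fun ξ =>
    ENNReal.ofReal_le_one.2 (Real.rpow_le_one_of_one_le_of_nonpos (by nlinarith [sq_nonneg ξ]) hs)
  have hint : ∫⁻ ξ, ENNReal.ofReal ((1 + ξ ^ 2) ^ s) * ‖f ξ‖ₑ ^ 2 ≤ ENNReal.ofReal c ^ 2 :=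
    calc ∫⁻ ξ, ENNReal.ofReal ((1 + ξ ^ 2) ^ s) * ‖f ξ‖ₑ ^ 2
        ≤ ∫⁻ ξ, ENNReal.ofReal A * ‖f ξ‖ₑ := lintegral_mono fun ξ =>
          calc ENNReal.ofReal ((1 + ξ ^ 2) ^ s) * ‖f ξ‖ₑ ^ 2 ≤ 1 * (‖f ξ‖ₑ * ‖f ξ‖ₑ) := by
                rw [pow_two (‖f ξ‖ₑ)]; gcongr; exact hweight ξ
            _ ≤ ENNReal.ofReal A * ‖f ξ‖ₑ := by rw [one_mul]; gcongr; exact hfA ξ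
      _ = ENNReal.ofReal A * ∫⁻ ξ, ‖f ξ‖ₑ := lintegral_const_mul' _ _ ENNReal.ofReal_ne_top
      _ ≤ ENNReal.ofReal (A * B) := by rw [ENNReal.ofReal_mul hA]; gcongr
      _ ≤ ENNReal.ofReal c ^ 2 := by
        rw [← ENNReal.ofReal_pow hc]
        exact ENNReal.ofReal_le_ofReal hABc
  calc HsR s f ≤ (ENNReal.ofReal c ^ 2) ^ (1 / 2 : ℝ) := ENNReal.rpow_le_rpow hint (by norm_num)
    _ = ENNReal.ofReal c := by rw [← ENNReal.rpow_natCast, ← ENNReal.rpow_mul]; norm_num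

lemma PicardBounds.HsR_le {M L R K : ℝ} {n : ℕ} {G : ℝ → ℝ → ℂ}
    (hG : PicardBounds M L R K n G) {s : ℝ} (hs : s ≤ 0) (hM : 0 ≤ M) (hL : 0 ≤ L) (hK : 0 ≤ K)
    (hn : 1 ≤ n) {c : ℝ} (hc : 0 ≤ c) (hML : M * L ≤ c ^ 2) (t : ℝ) :
    HsR s (G t) ≤ ENNReal.ofReal (c * (K * |t|) ^ (n - 1)) := by
  refine HsR_le_of_nonpos hs (by positivity) (by positivity) (hG.enorm_le t)
    (hG.lintegral_enorm_le t) ?_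
  have hn2 : (1 : ℝ) ≤ n ^ 2 := one_le_pow₀ (by exact_mod_cast hn)
  calc M * (K * |t|) ^ (n - 1) * (L / n ^ 2 * (K * |t|) ^ (n - 1))
      ≤ M * (K * |t|) ^ (n - 1) * (L * (K * |t|) ^ (n - 1)) := by
        gcongr
        exact div_le_self hL hn2
    _ = M * L * ((K * |t|) ^ (n - 1)) ^ 2 := by ring
    _ ≤ c ^ 2 * ((K * |t|) ^ (n - 1)) ^ 2 := by gcongr
    _ = (c * (K * |t|) ^ (n - 1)) ^ 2 := by ring

def wNsAmp (N s : ℝ) : ℝ := (Real.log N)⁻¹ * N ^ (-s)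

def wNsSupport (N : ℝ) : Set ℝ := Set.Icc (N - 1) (N + 1) ∪ Set.Icc (-N - 1) (-N + 1)

section Datum

variable {N : ℝ}

lemma wNsAmp_nonneg (hN : 1 ≤ N) (s : ℝ) : 0 ≤ wNsAmp N s :=
  mul_nonneg (inv_nonneg.2 (Real.log_nonneg hN)) (Real.rpow_nonneg (by linarith) _)

lemma measurableSet_wNsSupport (N : ℝ) : MeasurableSet (wNsSupport N) :=
  measurableSet_Icc.union measurableSet_Icc

lemma measurable_wNs (N s : ℝ) : Measurable (wNs N s) :=
  measurable_const.mul (measurable_const.indicator (measurableSet_wNsSupport N))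

lemma enorm_wNs (hN : 1 ≤ N) (s ξ : ℝ) :
    ‖wNs N s ξ‖ₑ = (wNsSupport N).indicator (fun _ => ENNReal.ofReal (wNsAmp N s)) ξ := by
  rw [show wNs N s ξ = (wNsAmp N s : ℂ) * (wNsSupport N).indicator (fun _ => 1) ξ from rfl]
  by_cases hξ : ξ ∈ wNsSupport N
  · rw [Set.indicator_of_mem hξ, Set.indicator_of_mem hξ, mul_one, ← ofReal_norm,
      Complex.norm_real, Real.norm_of_nonneg (wNsAmp_nonneg hN s)]
  · simp [hξ]

lemma enorm_wNs_le (hN : 1 ≤ N) (s ξ : ℝ) : ‖wNs N s ξ‖ₑ ≤ ENNReal.ofReal (wNsAmp N s) := by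
  rw [enorm_wNs hN]
  exact Set.indicator_le_self _ _ ξ

lemma wNs_eq_zero (hN : 0 ≤ N) (s : ℝ) {ξ : ℝ} (hξ : N + 1 < |ξ|) : wNs N s ξ = 0 := by
  have : ξ ∉ Set.Icc (N - 1) (N + 1) ∪ Set.Icc (-N - 1) (-N + 1) := by
    rintro (⟨h₁, h₂⟩ | ⟨h₁, h₂⟩) <;> cases abs_cases ξ <;> linarith
  simp [wNs, Set.indicator_of_notMem this]

lemma volume_wNsSupport (hN : 1 < N) : volume (wNsSupport N) = ENNReal.ofReal 4 := by
  have hdisj : Disjoint (Set.Icc (N - 1) (N + 1)) (Set.Icc (-N - 1) (-N + 1)) :=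
    Set.disjoint_left.2 fun ξ h₁ h₂ => by linarith [h₁.1, h₂.2]
  rw [wNsSupport, measure_union hdisj measurableSet_Icc, Real.volume_Icc, Real.volume_Icc,
    ← ENNReal.ofReal_add (by linarith) (by linarith)]
  ring_nf

lemma lintegral_enorm_wNs_pow (hN : 1 < N) (s : ℝ) {p : ℕ} (hp : p ≠ 0) :
    ∫⁻ ξ, ‖wNs N s ξ‖ₑ ^ p = ENNReal.ofReal (4 * wNsAmp N s ^ p) := by
  have hpow : ∀ ξ, ‖wNs N s ξ‖ₑ ^ p =
      (wNsSupport N).indicator (fun _ => ENNReal.ofReal (wNsAmp N s) ^ p) ξ := fun ξ => by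
    by_cases hξ : ξ ∈ wNsSupport N <;> simp [enorm_wNs hN.le, hξ, hp]
  rw [lintegral_congr hpow, lintegral_indicator_const (measurableSet_wNsSupport N),
    volume_wNsSupport hN, ← ENNReal.ofReal_pow (wNsAmp_nonneg hN.le s),
    ← ENNReal.ofReal_mul (pow_nonneg (wNsAmp_nonneg hN.le s) p), mul_comm]

lemma L1R_wNs (hN : 1 < N) (s : ℝ) : L1R (wNs N s) = ENNReal.ofReal (4 * wNsAmp N s) := by
  have := lintegral_enorm_wNs_pow hN s one_ne_zero
  simp only [pow_one] at this
  exact this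

lemma L2R_wNs_sq (hN : 1 < N) (s : ℝ) :
    L2R (wNs N s) ^ 2 = ENNReal.ofReal (4 * wNsAmp N s ^ 2) := by
  rw [L2R, ← ENNReal.rpow_natCast, ← ENNReal.rpow_mul, show (1 / 2 : ℝ) * (2 : ℕ) = 1 by norm_num,
    ENNReal.rpow_one]
  exact lintegral_enorm_wNs_pow hN s two_ne_zero

end Datum

/-- `H^s`-bounds for the Kawahara Picard iterates with datum
`w_{N,s}`, `s < −1/2`: `‖gₙ(t)‖_{H^s_ξ} ≤ Cⁿ (N t)^{n−1} ‖w‖_{L¹}^{n−2} ‖w‖_{L²}²`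
for `n ≥ 2`, with `C > 0` depending only on `s`. -/
theorem statement13 (s : ℝ) (hs : s < -(1 / 2 : ℝ)) :
    ∃ C : ℝ, 0 < C ∧
      ∀ b : ℝ, b = -1 ∨ b = 0 ∨ b = 1 →
      ∀ N : ℝ, 2 ≤ N →
      ∀ g : ℕ → ℝ → ℝ → ℂ, KawPicard b (wNs N s) g →
      ∀ t : ℝ, 0 < t → ∀ n : ℕ, 2 ≤ n →
        HsR s (g n t) ≤
          ENNReal.ofReal (C ^ n * (N * t) ^ (n - 1)) *
            L1R (wNs N s) ^ (n - 2) * L2R (wNs N s) ^ 2 := by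
  refine ⟨32, by norm_num, fun b _ N hN g hg t ht n hn => ?_⟩
  set m := wNsAmp N s
  have hm : 0 ≤ m := wNsAmp_nonneg (by linarith) s
  have hbounds := hg.picardBounds (measurable_wNs N s) (enorm_wNs_le (by linarith) s)
    (L1R_wNs (by linarith) s).le (fun ξ => wNs_eq_zero (by linarith) s) hm
    (by positivity : 0 ≤ 4 * m) (by linarith : 0 ≤ N + 1) n (by omega)
  refine (hbounds.HsR_le (c := 2 * m) (by linarith) hm (by positivity) (by positivity) (by omega)
    (by positivity) (by nlinarith) t).trans ?_
  have hC : 0 ≤ (32 : ℝ) ^ n * (N * t) ^ (n - 1) := by positivity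
  rw [L1R_wNs (by linarith) s, L2R_wNs_sq (by linarith) s, ← ENNReal.ofReal_pow (by positivity),
    ← ENNReal.ofReal_mul hC, ← ENNReal.ofReal_mul (by positivity)]
  refine ENNReal.ofReal_le_ofReal ?_
  have hK : 16 * (N + 1) * (4 * m) * |t| ≤ 32 * (4 * m) * (N * t) := by
    rw [abs_of_pos ht]
    nlinarith [mul_nonneg (mul_nonneg hm ht.le) (by linarith : (0 : ℝ) ≤ N - 1)]
  obtain ⟨k, rfl⟩ : ∃ k, n = k + 2 := ⟨n - 2, by omega⟩
  simp only [Nat.add_sub_cancel, show k + 2 - 1 = k + 1 by omega]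
  calc 2 * m * (16 * (N + 1) * (4 * m) * |t|) ^ (k + 1)
      ≤ 32 * m * (32 * (4 * m) * (N * t)) ^ (k + 1) := by gcongr; norm_num
    _ = 32 ^ (k + 2) * (N * t) ^ (k + 1) * (4 * m) ^ k * (4 * m ^ 2) := by
        simp only [mul_pow]
        ring

end
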